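/- Merging two block groups cannot decrease the optimal total travel time when their travel-time rows are replaced by the pointwise maximum: if block groups i1, i2 are merged into a single group with demand p i1 + p i2 and travel times T' j = max(T i1 j, T i2 j), then the optimal value of the merged problem is at least the optimal value of the original problem. -/

import Mathlib

open scoped BigOperators NNReal
open Classical

private lemma exists_pointwise_le_sum_eq {Sf : Type*} [Fintype Sf]
    (f : Sf → ℕ) : ∀ n : ℕ, n ≤ ∑ j, f j →
    ∃ g : Sf → ℕ, (∀ j, g j ≤ f j) ∧ ∑ j, g j = n := by
  intro n
  induction n with
  | zero => exact fun _ => ⟨fun _ => 0, fun _ => Nat.zero_le _, by simp⟩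
  | succ n ih =>
    intro hn
    obtain ⟨g, hg, hsum⟩ := ih (Nat.le_of_succ_le hn)
    have hlt : ∃ j, g j < f j := by
      by_contra h
      push_neg at h
      have : ∑ j, f j ≤ ∑ j, g j := Finset.sum_le_sum fun j _ => h j
      omega
    obtain ⟨j, hj⟩ := hlt
    refine ⟨Function.update g j (g j + 1), ?_, ?_⟩
    · intro k
      by_cases hk : k = j
      · subst hk; simp [Function.update_self]; omega
      · simp [Function.update_of_ne hk, hg k]
    · rw [Finset.sum_update_of_mem (Finset.mem_univ j)]
      rw [← Finset.add_sum_erase _ g (Finset.mem_univ j)] at hsum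
      rw [Finset.sdiff_singleton_eq_erase]
      omega

/-- Merging two block groups `i1, i2` (demand `p i1 + p i2`,
travel-time row the pointwise max) cannot decrease the optimal total travel
time. -/
theorem merge_blocks_opt_ge
    {Sc Sf : Type*} [Fintype Sc] [Fintype Sf] [DecidableEq Sc]
    (T : Sc → Sf → ℝ≥0) (p : Sc → ℕ) (c : Sf → ℕ)
    (i1 i2 : Sc) (hne : i1 ≠ i2)
    (p' : Sc → ℕ)
    (hp' : p' = fun i => if i = i1 then p i1 + p i2 else if i = i2 then 0 else p i)
    (T' : Sc → Sf → ℝ≥0)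
    (hT' : T' = fun i j => if i = i1 then max (T i1 j) (T i2 j) else T i j)
    (t tmerged : ℝ≥0)
    (hopt : IsLeast {s : ℝ≥0 | ∃ x : Sc → Sf → ℕ,
        (∀ i, ∑ j, x i j = p i) ∧ (∀ j, ∑ i, x i j ≤ c j) ∧
        s = ∑ i, ∑ j, T i j * (x i j : ℝ≥0)} t)
    (hoptm : IsLeast {s : ℝ≥0 | ∃ x : Sc → Sf → ℕ,
        (∀ i, ∑ j, x i j = p' i) ∧ (∀ j, ∑ i, x i j ≤ c j) ∧
        s = ∑ i, ∑ j, T' i j * (x i j : ℝ≥0)} tmerged) :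
    t ≤ tmerged := by
  obtain ⟨x, hrow, hcol, hcost⟩ := hoptm.1
  subst hp' hT'
  -- row i2 of x is zero
  have hx2 : ∀ j, x i2 j = 0 := by
    have h2 : ∑ j, x i2 j = 0 := by simpa [hne.symm] using hrow i2
    intro j
    exact (Finset.sum_eq_zero_iff.mp h2) j (Finset.mem_univ j)
  have hrow1 : ∑ j, x i1 j = p i1 + p i2 := by simpa using hrow i1
  obtain ⟨g, hg, hgsum⟩ := exists_pointwise_le_sum_eq (x i1) (p i1)
    (by rw [hrow1]; omega)
  set y : Sc → Sf → ℕ := fun i j =>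
    if i = i1 then g j else if i = i2 then x i1 j - g j else x i j with hy
  have hyi1 : ∀ j, y i1 j = g j := fun j => by simp [hy]
  have hyi2 : ∀ j, y i2 j = x i1 j - g j := fun j => by simp [hy, hne.symm]
  -- pairwise sum decomposition helper
  have pairsum : ∀ (f : Sc → ℝ≥0), ∑ i, f i =
      f i1 + f i2 + ∑ i ∈ (Finset.univ.erase i1).erase i2, f i := by
    intro f
    rw [← Finset.add_sum_erase _ f (Finset.mem_univ i1),
      ← Finset.add_sum_erase _ f (Finset.mem_erase.mpr ⟨hne.symm, Finset.mem_univ i2⟩),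
      add_assoc]
  have pairsumN : ∀ (f : Sc → ℕ), ∑ i, f i =
      f i1 + f i2 + ∑ i ∈ (Finset.univ.erase i1).erase i2, f i := by
    intro f
    rw [← Finset.add_sum_erase _ f (Finset.mem_univ i1),
      ← Finset.add_sum_erase _ f (Finset.mem_erase.mpr ⟨hne.symm, Finset.mem_univ i2⟩),
      add_assoc]
  have hysub : ∀ j, ∑ i, y i j = ∑ i, x i j := by
    intro j
    rw [pairsumN (fun i => y i j), pairsumN (fun i => x i j)]
    have h1 : y i1 j + y i2 j = x i1 j + x i2 j := by
      rw [hyi1, hyi2, hx2 j]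
      have := hg j; omega
    have h2 : ∑ i ∈ (Finset.univ.erase i1).erase i2, y i j
        = ∑ i ∈ (Finset.univ.erase i1).erase i2, x i j := by
      apply Finset.sum_congr rfl
      intro i hi
      simp only [Finset.mem_erase] at hi
      simp [hy, hi.1, hi.2.1]
    rw [h1, h2]
  have hmem : (∑ i, ∑ j, T i j * (y i j : ℝ≥0)) ∈
      {s : ℝ≥0 | ∃ x : Sc → Sf → ℕ,
        (∀ i, ∑ j, x i j = p i) ∧ (∀ j, ∑ i, x i j ≤ c j) ∧
        s = ∑ i, ∑ j, T i j * (x i j : ℝ≥0)} := by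
    refine ⟨y, ?_, ?_, rfl⟩
    · intro i
      by_cases h1 : i = i1
      · subst h1; simpa [hy] using hgsum
      · by_cases h2 : i = i2
        · rw [h2]
          calc ∑ j, y i2 j = ∑ j, (x i1 j - g j) :=
                Finset.sum_congr rfl (fun j _ => hyi2 j)
            _ = ∑ j, x i1 j - ∑ j, g j :=
                Finset.sum_tsub_distrib _ (fun j _ => hg j)
            _ = p i2 := by rw [hrow1, hgsum]; omega
        · simpa [hy, h1, h2] using hrow i
    · intro j
      rw [hysub j]; exact hcol j
  have ht := hopt.2 hmem
  refine le_trans ht ?_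
  rw [hcost]
  rw [pairsum (fun i => ∑ j, T i j * (y i j : ℝ≥0)),
    pairsum (fun i => ∑ j, (if i = i1 then max (T i1 j) (T i2 j) else T i j) * (x i j : ℝ≥0))]
  have hrest : ∑ i ∈ (Finset.univ.erase i1).erase i2, ∑ j, T i j * (y i j : ℝ≥0)
      = ∑ i ∈ (Finset.univ.erase i1).erase i2,
        ∑ j, (if i = i1 then max (T i1 j) (T i2 j) else T i j) * (x i j : ℝ≥0) := by
    apply Finset.sum_congr rfl
    intro i hi
    simp only [Finset.mem_erase] at hi
    simp [hy, hi.1, hi.2.1]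
  rw [hrest]
  apply add_le_add_left
  have key : (∑ j, T i1 j * (y i1 j : ℝ≥0)) + ∑ j, T i2 j * (y i2 j : ℝ≥0)
      ≤ ∑ j, max (T i1 j) (T i2 j) * (x i1 j : ℝ≥0) := by
    rw [← Finset.sum_add_distrib]
    apply Finset.sum_le_sum
    intro j _
    rw [hyi1, hyi2]
    have hsplit : (g j : ℝ≥0) + ((x i1 j - g j : ℕ) : ℝ≥0) = (x i1 j : ℝ≥0) := by
      have := hg j
      rw [← Nat.cast_add]
      congr 1
      omega
    calc T i1 j * (g j : ℝ≥0) + T i2 j * ((x i1 j - g j : ℕ) : ℝ≥0)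
        ≤ max (T i1 j) (T i2 j) * (g j : ℝ≥0)
          + max (T i1 j) (T i2 j) * ((x i1 j - g j : ℕ) : ℝ≥0) := by
          gcongr <;> [exact le_max_left _ _; exact le_max_right _ _]
      _ = max (T i1 j) (T i2 j) * (x i1 j : ℝ≥0) := by rw [← mul_add, hsplit]
  calc (∑ j, T i1 j * (y i1 j : ℝ≥0)) + ∑ j, T i2 j * (y i2 j : ℝ≥0)
      ≤ ∑ j, max (T i1 j) (T i2 j) * (x i1 j : ℝ≥0) := key
    _ ≤ (∑ j, (if i1 = i1 then max (T i1 j) (T i2 j) else T i1 j) * (x i1 j : ℝ≥0))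
        + ∑ j, (if i2 = i1 then max (T i1 j) (T i2 j) else T i2 j) * (x i2 j : ℝ≥0) := by
        simp [hx2]
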